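/- arXiv:1709.08890 — 9 statements merged into one kernel-verified Lean document; each statement's English description precedes it below -/
import Mathlib

section
/- If every permutation SV of a vertex subset V of a graph G admits a witnessing matching of size at least k, then the partial matching width of V in G is at least k/2. -/
/-!
Fix the prefix/suffix split `l.take m`, `l.drop m` of a witnessing matching. Since `l` has no
duplicates, an edge supported by the split has exactly one endpoint in `l.take m`, and an edge
supported by `V` has exactly one endpoint in `V = l.take l.length`. One of the two kinds accounts
for at least half of the `k` edges; orienting those edges from the prefix outwards gives the
required matching of size `k / 2`.
-/

/-- `f : Fin k → α × α` lists the edges of a matching of size `k` in `G`. -/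
def IsMatchingFun {α : Type*} (G : SimpleGraph α) {k : ℕ} (f : Fin k → α × α) : Prop :=
  (∀ i, G.Adj (f i).1 (f i).2) ∧
  ∀ i j, i ≠ j → (f i).1 ≠ (f j).1 ∧ (f i).1 ≠ (f j).2 ∧
    (f i).2 ≠ (f j).1 ∧ (f i).2 ≠ (f j).2

namespace IsMatchingFun

variable {α : Type*} {G : SimpleGraph α} {k : ℕ} {f : Fin k → α × α}

theorem comp_injective (hf : IsMatchingFun G f) {n : ℕ} {e : Fin n → Fin k}
    (he : e.Injective) : IsMatchingFun G (f ∘ e) :=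
  ⟨fun i => hf.1 (e i), fun _ _ hij => hf.2 _ _ (he.ne hij)⟩

theorem of_eq_or_eq_swap (hf : IsMatchingFun G f) {g : Fin k → α × α}
    (hg : ∀ i, g i = f i ∨ g i = (f i).swap) : IsMatchingFun G g := by
  refine ⟨fun i => ?_, fun i j hij => ?_⟩
  · rcases hg i with h | h <;> rw [h]
    exacts [hf.1 i, (hf.1 i).symm]
  · have := hf.2 i j hij
    rcases hg i with hi | hi <;> rcases hg j with hj | hj <;>
      simp only [hi, hj, Prod.fst_swap, Prod.snd_swap] <;> tauto

theorem exists_orient (hf : IsMatchingFun G f) (s : Set α)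
    (hcross : ∀ i, Xor ((f i).1 ∈ s) ((f i).2 ∈ s)) :
    ∃ g : Fin k → α × α, IsMatchingFun G g ∧ ∀ i, (g i).1 ∈ s ∧ (g i).2 ∉ s := by
  classical
  refine ⟨fun i => if (f i).1 ∈ s then f i else (f i).swap,
    hf.of_eq_or_eq_swap fun i => by split_ifs <;> simp, fun i => ?_⟩
  rcases hcross i with h | h
  · simpa [h.1] using h
  · simpa [h.2] using h

theorem exists_orient_of_le_card (hf : IsMatchingFun G f) (s : Set α)
    (S : Finset (Fin k)) (hcross : ∀ i ∈ S, Xor ((f i).1 ∈ s) ((f i).2 ∈ s))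
    {n : ℕ} (hn : n ≤ S.card) :
    ∃ g : Fin n → α × α, IsMatchingFun G g ∧ ∀ i, (g i).1 ∈ s ∧ (g i).2 ∉ s := by
  obtain ⟨T, hTS, hT⟩ := Finset.exists_subset_card_eq hn
  exact (hf.comp_injective (T.orderEmbOfFin hT).injective).exists_orient s
    fun i => hcross _ (hTS (T.orderEmbOfFin_mem hT i))

end IsMatchingFun

theorem Finset.half_card_le_card_filter_or {ι : Type*} [DecidableEq ι] (s : Finset ι)
    (p q : ι → Prop) [DecidablePred p] [DecidablePred q] (h : ∀ i ∈ s, p i ∨ q i) :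
    s.card / 2 ≤ (s.filter p).card ∨ s.card / 2 ≤ (s.filter q).card := by
  have hcover : s.card ≤ (s.filter p).card + (s.filter q).card :=
    calc s.card = (s.filter fun i => p i ∨ q i).card := by rw [Finset.filter_true_of_mem h]
      _ ≤ (s.filter p).card + (s.filter q).card := by
        rw [Finset.filter_or]; exact Finset.card_union_le _ _
  omega

theorem List.Nodup.not_mem_take_of_mem_drop {α : Type*} {l : List α} (hl : l.Nodup) {m : ℕ}
    {a : α} (ha : a ∈ l.drop m) : a ∉ l.take m :=
  fun ha' => List.disjoint_take_drop hl le_rfl ha' ha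

/-- If every permutation of `V` admits a witnessing matching of size at least `k`,
then the partial matching width of `V` in `G` is at least `k/2`. -/
theorem stmt0 {α : Type*} [DecidableEq α] (G : SimpleGraph α) (V : Finset α) (k : ℕ)
    (hw : ∀ l : List α, l.Nodup → l.toFinset = V →
      ∃ (m : ℕ) (f : Fin k → α × α), IsMatchingFun G f ∧
        ∀ i, ((f i).1 ∈ l.take m ∧ (f i).2 ∈ l.drop m) ∨
             ((f i).2 ∈ l.take m ∧ (f i).1 ∈ l.drop m) ∨
             ((f i).1 ∈ V ∧ (f i).2 ∉ V) ∨
             ((f i).2 ∈ V ∧ (f i).1 ∉ V)) :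
    ∀ l : List α, l.Nodup → l.toFinset = V →
      ∃ (m : ℕ) (g : Fin (k / 2) → α × α), IsMatchingFun G g ∧
        ∀ i, (g i).1 ∈ l.take m ∧ (g i).2 ∉ l.take m := by
  intro l hl hV
  obtain ⟨m, f, hf, hsupp⟩ := hw l hl hV
  let prefixSet (m' : ℕ) : Set α := {a | a ∈ l.take m'}
  let crosses (m' : ℕ) (i : Fin k) : Prop :=
    Xor ((f i).1 ∈ prefixSet m') ((f i).2 ∈ prefixSet m')
  have hmemV (a : α) : a ∈ V ↔ a ∈ prefixSet l.length := by
    simp only [prefixSet, Set.mem_ofPred_eq, List.take_length, ← hV, List.mem_toFinset]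
  have hcrosses (i : Fin k) : crosses m i ∨ crosses l.length i := by
    simp only [crosses, Xor, ← hmemV]
    rcases hsupp i with h | h | h | h
    exacts [.inl (.inl ⟨h.1, hl.not_mem_take_of_mem_drop h.2⟩),
      .inl (.inr ⟨h.1, hl.not_mem_take_of_mem_drop h.2⟩), .inr (.inl h), .inr (.inr h)]
  classical
  have hhalf := (Finset.univ : Finset (Fin k)).half_card_le_card_filter_or _ _
    fun i _ => hcrosses i
  rw [Finset.card_univ, Fintype.card_fin] at hhalf
  rcases hhalf with h | h
  · exact ⟨m, hf.exists_orient_of_le_card _ _ (fun i hi => (Finset.mem_filter.1 hi).2) h⟩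
  · exact ⟨l.length, hf.exists_orient_of_le_card _ _ (fun i hi => (Finset.mem_filter.1 hi).2) h⟩
end

section
/- Let T be a tree, H a graph with vertex set {1,…,p}, and T(H) the graph consisting of a disjoint copy H^v of H for each v ∈ V(T), together with an edge between u^i and v^i whenever u,v are adjacent in T. Suppose V ⊆ V(T(H)) is partitioned into V₁, V₂ (with roles: in V₁, in V₂, or outside V), and there exist vertices u,v of T and a subset {1,…,t} of V(H) such that for each i ≤ t, the role of u^i differs from the role of v^i. Then T(H) has a matching of size t in which the two ends of every edge have different roles. -/
/-- Two vertices have the same role w.r.t. the partition `(V₁, V₂, outside)`. -/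
def SameRole {δ : Type*} (V₁ V₂ : Set δ) (a b : δ) : Prop :=
  (a ∈ V₁ ↔ b ∈ V₁) ∧ (a ∈ V₂ ↔ b ∈ V₂)

/-!
For each `i ≤ t`, the path from `u` to `v` in `T` lifts to the layer `T × {c i}` of `T □ H`,
and since the role changes between its ends, it changes along some edge of it. Edges taken
in different layers are vertex-disjoint, so these `t` edges form the required matching.
-/

theorem SameRole.trans {δ : Type*} {V₁ V₂ : Set δ} {a b d : δ}
    (hab : SameRole V₁ V₂ a b) (hbd : SameRole V₁ V₂ b d) : SameRole V₁ V₂ a d :=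
  ⟨hab.1.trans hbd.1, hab.2.trans hbd.2⟩

theorem SimpleGraph.Preconnected.exists_adj_mem_not_mem {V : Type*} {G : SimpleGraph V}
    (hG : G.Preconnected) {S : Set V} {u v : V} (hu : u ∈ S) (hv : v ∉ S) :
    ∃ a b, G.Adj a b ∧ a ∈ S ∧ b ∉ S := by
  obtain ⟨p⟩ := hG u v
  obtain ⟨d, -, hd⟩ := p.exists_boundary_dart S hu hv
  exact ⟨d.fst, d.snd, d.adj, hd⟩

theorem SimpleGraph.Preconnected.exists_adj_not_sameRole {V δ : Type*} {G : SimpleGraph V}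
    (hG : G.Preconnected) {V₁ V₂ : Set δ} (e : V → δ) {u v : V}
    (huv : ¬ SameRole V₁ V₂ (e u) (e v)) :
    ∃ a b, G.Adj a b ∧ ¬ SameRole V₁ V₂ (e a) (e b) := by
  obtain ⟨a, b, hab, ha, hb⟩ :=
    hG.exists_adj_mem_not_mem (S := {x | SameRole V₁ V₂ (e u) (e x)}) ⟨Iff.rfl, Iff.rfl⟩ huv
  exact ⟨a, b, hab, fun hab' => hb (ha.trans hab')⟩

theorem isMatchingFun_boxProd_of_injective {β γ : Type*} {T : SimpleGraph β}
    {H : SimpleGraph γ} {t : ℕ} {a b : Fin t → β} {c : Fin t → γ} (hab : ∀ i, T.Adj (a i) (b i))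
    (hc : Function.Injective c) :
    IsMatchingFun (T.boxProd H) fun i => ((a i, c i), (b i, c i)) := by
  refine ⟨fun i => SimpleGraph.boxProd_adj_left.mpr (hab i), fun i j hij => ?_⟩
  have hcij : c i ≠ c j := hc.ne hij
  simp only [ne_eq, Prod.ext_iff, hcij, and_false, not_false_eq_true, and_self]

theorem stmt1_general {β γ : Type*} (T : SimpleGraph β) (H : SimpleGraph γ)
    (hT : T.IsTree) (V₁ V₂ : Set (β × γ))
    (t : ℕ) (u v : β) (c : Fin t → γ) (hc : Function.Injective c)
    (hrole : ∀ i, ¬ SameRole V₁ V₂ (u, c i) (v, c i)) :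
    ∃ f : Fin t → (β × γ) × (β × γ), IsMatchingFun (T.boxProd H) f ∧
      ∀ i, ¬ SameRole V₁ V₂ (f i).1 (f i).2 := by
  have hedge : ∀ i, ∃ a b, T.Adj a b ∧ ¬ SameRole V₁ V₂ (a, c i) (b, c i) := fun i =>
    hT.connected.preconnected.exists_adj_not_sameRole (fun x => (x, c i)) (hrole i)
  choose a b hab hbad using hedge
  exact ⟨_, isMatchingFun_boxProd_of_injective hab hc, hbad⟩

/-- If some `t` corresponding copies in `H^u` and `H^v` have different roles,
then `T(H)` (formalized as the box product `T □ H`) has a matching of size `t`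
whose every edge joins vertices of different roles. -/
theorem stmt1 {β γ : Type*} (T : SimpleGraph β) (H : SimpleGraph γ)
    (hT : T.IsTree) (V₁ V₂ : Set (β × γ)) (hdisj : Disjoint V₁ V₂)
    (t : ℕ) (u v : β) (c : Fin t → γ) (hc : Function.Injective c)
    (hrole : ∀ i, ¬ SameRole V₁ V₂ (u, c i) (v, c i)) :
    ∃ f : Fin t → (β × γ) × (β × γ), IsMatchingFun (T.boxProd H) f ∧
      ∀ i, ¬ SameRole V₁ V₂ (f i).1 (f i).2 :=
  stmt1_general T H hT V₁ V₂ t u v c hc hrole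
end

section
/- Let T be a tree with at least p vertices and H a connected graph with at least 2p vertices. Let V ⊆ V(T(H)) such that every vertex of T is occupied by V (i.e., V(H^u) ∩ V ≠ ∅ for all u ∈ V(T)). Let V₁,V₂ partition V with |V_i| ≤ |V(T(H))| − p² for each i. Then T(H) contains a matching of size p in which the ends of every edge have different roles with respect to (V₁,V₂). -/
open Finset SimpleGraph

def role {δ : Type*} [DecidableEq δ] (V₁ V₂ : Finset δ) (z : δ) : Bool × Bool :=
  (decide (z ∈ V₁), decide (z ∈ V₂))

theorem sameRole_iff_role_eq {δ : Type*} [DecidableEq δ] (V₁ V₂ : Finset δ) (a b : δ) :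
    SameRole (V₁ : Set δ) V₂ a b ↔ role V₁ V₂ a = role V₁ V₂ b := by
  simp [SameRole, role, Prod.ext_iff]

theorem SimpleGraph.Preconnected.exists_adj_apply_ne {V X : Type*} {G : SimpleGraph V}
    (hG : G.Preconnected) (f : V → X) {a b : V} (hab : f a ≠ f b) :
    ∃ u v, G.Adj u v ∧ f u ≠ f v := by
  obtain ⟨w⟩ := hG a b
  obtain ⟨d, -, hd, hd'⟩ := w.exists_boundary_dart {x | f x = f a} rfl hab.symm
  exact ⟨d.fst, d.snd, d.adj, fun h => hd' (h.symm.trans hd)⟩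

/-- Edges lying in distinct fibres of `c` are pairwise disjoint. -/
theorem exists_isMatchingFun_of_fibres {α ι : Type*} (G : SimpleGraph α) (P : α → α → Prop)
    (c : α → ι) {p : ℕ} (S : Finset ι) (hS : p ≤ #S)
    (h : ∀ i ∈ S, ∃ a b, G.Adj a b ∧ P a b ∧ c a = i ∧ c b = i) :
    ∃ f : Fin p → α × α, IsMatchingFun G f ∧ ∀ k, P (f k).1 (f k).2 := by
  obtain ⟨e⟩ := Function.Embedding.nonempty_of_card_le (α := Fin p) (β := S)
    (by simpa using hS)
  choose a b hadj hP ha hb using fun i : S => h i i.2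
  refine ⟨fun k => (a (e k), b (e k)), ⟨fun k => hadj _, fun k l hkl => ?_⟩, fun k => hP _⟩
  have hne : ∀ x y, c x = e k → c y = e l → x ≠ y := fun x y hx hy hxy =>
    hkl (e.injective (Subtype.ext (hx.symm.trans ((congrArg c hxy).trans hy))))
  exact ⟨hne _ _ (ha _) (ha _), hne _ _ (ha _) (hb _), hne _ _ (hb _) (ha _),
    hne _ _ (hb _) (hb _)⟩

section BoxProd

variable {β γ X : Type*} {T : SimpleGraph β} {H : SimpleGraph γ} {p : ℕ}

theorem exists_isMatchingFun_boxProd_left (hT : T.Preconnected) (r : β × γ → X)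
    (S : Finset γ) (hS : p ≤ #S) (hmixed : ∀ i ∈ S, ∃ u v, r (u, i) ≠ r (v, i)) :
    ∃ f : Fin p → (β × γ) × (β × γ), IsMatchingFun (T □ H) f ∧ ∀ k, r (f k).1 ≠ r (f k).2 := by
  refine exists_isMatchingFun_of_fibres _ (fun a b => r a ≠ r b) Prod.snd S hS fun i hi => ?_
  obtain ⟨u, v, huv⟩ := hmixed i hi
  obtain ⟨u', v', hadj, hne⟩ := hT.exists_adj_apply_ne (fun u => r (u, i)) huv
  exact ⟨(u', i), (v', i), boxProd_adj_left.mpr hadj, hne, rfl, rfl⟩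

theorem exists_isMatchingFun_boxProd_right (hH : H.Preconnected) (r : β × γ → X)
    (S : Finset β) (hS : p ≤ #S) (hmixed : ∀ u ∈ S, ∃ i j, r (u, i) ≠ r (u, j)) :
    ∃ f : Fin p → (β × γ) × (β × γ), IsMatchingFun (T □ H) f ∧ ∀ k, r (f k).1 ≠ r (f k).2 := by
  refine exists_isMatchingFun_of_fibres _ (fun a b => r a ≠ r b) Prod.fst S hS fun u hu => ?_
  obtain ⟨i, j, hij⟩ := hmixed u hu
  obtain ⟨i', j', hadj, hne⟩ := hH.exists_adj_apply_ne (fun i => r (u, i)) hij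
  exact ⟨(u, i'), (u, j'), boxProd_adj_right.mpr hadj, hne, rfl, rfl⟩

end BoxProd

section Grid

variable {β γ X : Type*} [Fintype β] [Fintype γ] [DecidableEq X]

theorem filter_apply_ne_subset_product (r : β × γ → X) (C : Finset β) (R : Finset γ)
    (hcol : ∀ u ∉ C, ∀ i j, r (u, i) = r (u, j)) (hrow : ∀ i ∉ R, ∀ u v, r (u, i) = r (v, i))
    {u₀ : β} (hu₀ : u₀ ∉ C) {i₀ : γ} (hi₀ : i₀ ∉ R) (i : γ) :
    ({z | r z ≠ r (u₀, i)} : Finset (β × γ)) ⊆ C ×ˢ R := by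
  rintro ⟨u, j⟩ hz
  rw [mem_filter] at hz
  refine mem_product.2 ⟨?_, ?_⟩
  · by_contra hu
    exact hz.2 ((hcol u hu j i₀).trans ((hrow i₀ hi₀ u u₀).trans (hcol u₀ hu₀ i₀ i)))
  · by_contra hj
    exact hz.2 ((hrow j hj u u₀).trans (hcol u₀ hu₀ j i))

theorem exists_forall_card_filter_apply_ne_lt_sq (r : β × γ → X) {p : ℕ}
    (hβ : p ≤ Fintype.card β) (hγ : p ≤ Fintype.card γ)
    (hR : #({i | ∃ u v, r (u, i) ≠ r (v, i)} : Finset γ) < p)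
    (hC : #({u | ∃ i j, r (u, i) ≠ r (u, j)} : Finset β) < p) :
    ∃ u₀, ∀ i, #({z | r z ≠ r (u₀, i)} : Finset (β × γ)) < p ^ 2 := by
  obtain ⟨u₀, -, hu₀⟩ := exists_mem_notMem_of_card_lt_card (t := univ) (hC.trans_le hβ)
  obtain ⟨i₀, -, hi₀⟩ := exists_mem_notMem_of_card_lt_card (t := univ) (hR.trans_le hγ)
  refine ⟨u₀, fun i => ?_⟩
  calc _ ≤ #(_ ×ˢ _) := card_le_card <| filter_apply_ne_subset_product r _ _
          (by simp) (by simp) hu₀ hi₀ i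
    _ = _ := card_product _ _
    _ < p * p := Nat.mul_lt_mul'' hC hR
    _ = p ^ 2 := (sq p).symm

end Grid

theorem card_lt_card_add_of_forall_notMem_mem {α : Type*} [Fintype α] [DecidableEq α]
    {W s : Finset α} {n : ℕ} (h : ∀ z ∉ W, z ∈ s) (hs : #s < n) :
    Fintype.card α < #W + n := calc
  _ ≤ #(W ∪ s) := by
    rw [← card_univ]
    exact card_le_card fun z _ => by by_cases hz : z ∈ W <;> simp [hz, h]
  _ ≤ #W + #s := card_union_le W s
  _ < #W + n := by omega

theorem stmt2_general {β γ : Type*} [Fintype β] [Fintype γ] [DecidableEq β] [DecidableEq γ]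
    (p : ℕ) (T : SimpleGraph β) (hT : T.IsTree) (hTcard : p ≤ Fintype.card β)
    (H : SimpleGraph γ) (hH : H.Connected) (hHcard : 2 * p ≤ Fintype.card γ)
    (V V₁ V₂ : Finset (β × γ))
    (hocc : ∀ u : β, ∃ i : γ, (u, i) ∈ V)
    (hpart : V₁ ∪ V₂ = V)
    (h1 : V₁.card + p ^ 2 ≤ Fintype.card (β × γ))
    (h2 : V₂.card + p ^ 2 ≤ Fintype.card (β × γ)) :
    ∃ f : Fin p → (β × γ) × (β × γ), IsMatchingFun (T.boxProd H) f ∧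
      ∀ i, ¬ SameRole (V₁ : Set (β × γ)) (V₂ : Set (β × γ)) (f i).1 (f i).2 := by
  set r := role V₁ V₂
  set R : Finset γ := {i | ∃ u v, r (u, i) ≠ r (v, i)}
  set C : Finset β := {u | ∃ i j, r (u, i) ≠ r (u, j)}
  have hdiff : ∀ a b, r a ≠ r b → ¬ SameRole (V₁ : Set (β × γ)) V₂ a b := fun a b h =>
    (sameRole_iff_role_eq V₁ V₂ a b).not.mpr h
  by_cases hR : p ≤ #R
  · obtain ⟨f, hf, hfr⟩ := exists_isMatchingFun_boxProd_left (H := H)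
      hT.connected.preconnected r R hR (by simp [R])
    exact ⟨f, hf, fun k => hdiff _ _ (hfr k)⟩
  by_cases hC : p ≤ #C
  · obtain ⟨f, hf, hfr⟩ := exists_isMatchingFun_boxProd_right (T := T)
      hH.preconnected r C hC (by simp [C])
    exact ⟨f, hf, fun k => hdiff _ _ (hfr k)⟩
  rw [not_le] at hR hC
  obtain ⟨u₀, hsmall⟩ := exists_forall_card_filter_apply_ne_lt_sq r hTcard (by omega) hR hC
  obtain ⟨i, hi⟩ := hocc u₀
  rw [← hpart, mem_union] at hi
  rcases hi with hi | hi
  · exact absurd h1 (card_lt_card_add_of_forall_notMem_mem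
      (fun z hz => by simp [r, role, hz, hi]) (hsmall i)).not_ge
  · exact absurd h2 (card_lt_card_add_of_forall_notMem_mem
      (fun z hz => by simp [r, role, hz, hi]) (hsmall i)).not_ge

/-- Lemma `goodpart3`: in `T(H) = T □ H`, if every vertex of `T` is occupied by `V`
and `V₁, V₂` is a balanced partition of `V`, then there is a matching of size `p`
joining vertices of different roles. -/
theorem stmt2 {β γ : Type*} [Fintype β] [Fintype γ] [DecidableEq β] [DecidableEq γ]
    (p : ℕ) (T : SimpleGraph β) (hT : T.IsTree) (hTcard : p ≤ Fintype.card β)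
    (H : SimpleGraph γ) (hH : H.Connected) (hHcard : 2 * p ≤ Fintype.card γ)
    (V V₁ V₂ : Finset (β × γ))
    (hocc : ∀ u : β, ∃ i : γ, (u, i) ∈ V)
    (hpart : V₁ ∪ V₂ = V) (hdisj : Disjoint V₁ V₂)
    (h1 : V₁.card + p ^ 2 ≤ Fintype.card (β × γ))
    (h2 : V₂.card + p ^ 2 ≤ Fintype.card (β × γ)) :
    ∃ f : Fin p → (β × γ) × (β × γ), IsMatchingFun (T.boxProd H) f ∧
      ∀ i, ¬ SameRole (V₁ : Set (β × γ)) (V₂ : Set (β × γ)) (f i).1 (f i).2 :=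
  stmt2_general p T hT hTcard H hH hHcard V V₁ V₂ hocc hpart h1 h2
end

section
/- Let T be a complete rooted ternary tree, H a connected graph with at least p vertices, and V ⊆ V(T(H)). If at least p vertices of T are occupied by V and at least one vertex of T is not occupied by V, then T(H) has a matching of size p all of whose edges have one end in V and the other end outside V. -/
/-- Vertices of the complete rooted ternary tree of height `h`:
sequences of child-choices of length at most `h` (the root is `[]`). -/
def TernV (h : ℕ) := {l : List (Fin 3) // l.length ≤ h}

/-- The complete rooted ternary tree of height `h`, as a simple graph:
a vertex is adjacent to each of its (at most three) children. -/
def ternaryTree (h : ℕ) : SimpleGraph (TernV h) :=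
  SimpleGraph.fromRel (fun a b => ∃ j : Fin 3, b.1 = a.1 ++ [j])

/-!
By König's theorem it suffices that no set `S` of fewer than `p` vertices of `T □ H` meets every
edge leaving `V`. Since `V` occupies at least `p` copies of `H` and `H` has at least `p` vertices,
some occupied copy `{u} × H` and some layer `T × {k}` avoid `S`. If `(u, k) ∈ V`, a path in the
layer from `(u, k)` to an unoccupied copy leaves `V`; otherwise a path inside `{u} × H` from a
vertex of `V` to `(u, k)` does. Either way the edge where it leaves `V` avoids `S`.
-/

open Finset

theorem Fintype.exists_partial_injective_of_card_le_filter_rel_add {α β : Type*}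
    [Fintype α] [Fintype β] (r : α → β → Prop) [DecidableRel r] (d : ℕ)
    (hall : ∀ A : Finset α, #A ≤ #{b | ∃ a ∈ A, r a b} + d) :
    ∃ s : Finset α, Fintype.card α ≤ #s + d ∧
      ∃ f : s → β, Function.Injective f ∧ ∀ a : s, r a (f a) := by
  classical
  -- `d` dummy vertices related to everything absorb the deficiency
  let r' (a : α) : β ⊕ Fin d → Prop := Sum.elim (r a) fun _ => True
  obtain ⟨F, hF_inj, hF⟩ := (Fintype.all_card_le_filter_rel_iff_exists_injective r').1 <| by
    intro A
    rcases A.eq_empty_or_nonempty with rfl | ⟨a₀, ha₀⟩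
    · simp
    have : ({x | ∃ a ∈ A, r' a x} : Finset _) =
        ({b | ∃ a ∈ A, r a b} : Finset β).disjSum univ := by
      ext (b | i)
      · simp [r']
      · simpa [r'] using ⟨a₀, ha₀⟩
    rw [this, card_disjSum, card_univ, Fintype.card_fin]
    exact hall A
  set s : Finset α := {a | (F a).isLeft}
  have hleft (a : s) : (F a).isLeft := (mem_filter.1 a.2).2
  have hsc : #sᶜ ≤ d := by
    calc #sᶜ ≤ #(univ.map (Function.Embedding.inr : Fin d ↪ β ⊕ Fin d)) := by
          refine card_le_card_of_injOn F (fun a ha => ?_) hF_inj.injOn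
          obtain ⟨i, hi⟩ := Sum.isRight_iff.1 (by simpa [s] using ha)
          simp [hi]
      _ = d := by simp
  have hinl (a : s) : Sum.inl ((F a).getLeft (hleft a)) = F a := Sum.inl_getLeft _ _
  refine ⟨s, ?_, fun a => (F a).getLeft (hleft a), fun a b hab => ?_, fun a => ?_⟩
  · have := card_add_card_compl s
    omega
  · exact Subtype.ext (hF_inj (by rw [← hinl a, ← hinl b]; exact congrArg Sum.inl hab))
  · have := hF a
    rw [← hinl a] at this
    exact this

theorem Fintype.exists_matching_of_no_small_vertexCover {α β : Type*} [Fintype α] [Fintype β]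
    (R : α → β → Prop) (p : ℕ)
    (hcover : ∀ (A : Finset α) (B : Finset β), #A + #B < p → ∃ a ∉ A, ∃ b ∉ B, R a b) :
    ∃ (f : Fin p ↪ α) (g : Fin p ↪ β), ∀ i, R (f i) (g i) := by
  classical
  have hp : p ≤ Fintype.card α := by
    by_contra! hlt
    obtain ⟨a, ha, -⟩ := hcover univ ∅ (by simpa using hlt)
    exact ha (mem_univ a)
  obtain ⟨s, hs, f, hf_inj, hf⟩ :=
    Fintype.exists_partial_injective_of_card_le_filter_rel_add R (Fintype.card α - p) <| by
      intro A
      by_contra! hlt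
      obtain ⟨a, ha, b, hb, hab⟩ := hcover Aᶜ {b | ∃ a ∈ A, R a b} <| by
        have := card_add_card_compl A
        omega
      exact hb (mem_filter.2 ⟨mem_univ b, a, by simpa using ha, hab⟩)
  obtain ⟨e⟩ : Nonempty (Fin p ↪ s) :=
    Function.Embedding.nonempty_of_card_le (by simp; omega)
  exact ⟨e.trans (Function.Embedding.subtype _), e.trans ⟨f, hf_inj⟩, fun i => hf (e i)⟩

namespace SimpleGraph

variable {α γ : Type*} {G : SimpleGraph α} {H : SimpleGraph γ}

theorem Preconnected.exists_adj_mem_notMem (hG : G.Preconnected) {S : Set α} {u v : α}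
    (hu : u ∈ S) (hv : v ∉ S) : ∃ x y, G.Adj x y ∧ x ∈ S ∧ y ∉ S := by
  obtain ⟨w⟩ := hG u v
  obtain ⟨d, -, hd⟩ := w.exists_boundary_dart S hu hv
  exact ⟨d.fst, d.snd, d.adj, hd⟩

theorem boxProd_exists_adj_mem_notMem_avoiding (hG : G.Preconnected) (hH : H.Preconnected)
    (V : Set (α × γ)) (hunocc : ∃ w, ∀ i, (w, i) ∉ V) (S : Finset (α × γ))
    (hocc : #S < {u | ∃ i, (u, i) ∈ V}.ncard) (hfiber : #S < Nat.card γ) :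
    ∃ x y, (G □ H).Adj x y ∧ x ∈ V ∧ y ∉ V ∧ x ∉ S ∧ y ∉ S := by
  obtain ⟨w, hw⟩ := hunocc
  -- by counting, some occupied copy `{u} × γ` of `H` and some layer `α × {k}` avoid `S`
  obtain ⟨u, ⟨j, huj⟩, hu⟩ := Set.exists_mem_notMem_of_ncard_lt_ncard
    (s := Prod.fst '' (S : Set (α × γ))) ((Set.ncard_image_le S.finite_toSet).trans_lt (by simpa))
  obtain ⟨k, -, hk⟩ := Set.exists_mem_notMem_of_ncard_lt_ncard
    (s := Prod.snd '' (S : Set (α × γ))) (t := Set.univ)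
    ((Set.ncard_image_le S.finite_toSet).trans_lt (by simpa))
  have hu' (i : γ) : (u, i) ∉ S := fun h => hu ⟨_, h, rfl⟩
  have hk' (v : α) : (v, k) ∉ S := fun h => hk ⟨_, h, rfl⟩
  by_cases huk : (u, k) ∈ V
  · obtain ⟨x, y, hxy, hx, hy⟩ :=
      hG.exists_adj_mem_notMem (S := {v | (v, k) ∈ V}) huk (hw k)
    exact ⟨(x, k), (y, k), boxProd_adj.2 (Or.inl ⟨hxy, rfl⟩), hx, hy, hk' x, hk' y⟩
  · obtain ⟨x, y, hxy, hx, hy⟩ :=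
      hH.exists_adj_mem_notMem (S := {i | (u, i) ∈ V}) huj huk
    exact ⟨(u, x), (u, y), boxProd_adj.2 (Or.inr ⟨hxy, rfl⟩), hx, hy, hu' x, hu' y⟩

end SimpleGraph

theorem isMatchingFun_of_embedding {α : Type*} {G : SimpleGraph α} {V : Set α} {p : ℕ}
    (f : Fin p ↪ V) (g : Fin p ↪ ↥Vᶜ) (hadj : ∀ i, G.Adj (f i) (g i)) :
    IsMatchingFun G fun i => ((f i : α), (g i : α)) := by
  refine ⟨hadj, fun i j hij => ⟨?_, ?_, ?_, ?_⟩⟩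
  · exact fun h => hij (f.injective (Subtype.ext h))
  · exact fun (h : (f i : α) = g j) => (g j).2 (h ▸ (f i).2)
  · exact fun (h : (g i : α) = f j) => (g i).2 (h ▸ (f j).2)
  · exact fun h => hij (g.injective (Subtype.ext h))

theorem SimpleGraph.boxProd_exists_matching_mem_notMem {α γ : Type*} [Finite α] [Finite γ]
    {G : SimpleGraph α} {H : SimpleGraph γ} (hG : G.Preconnected) (hH : H.Preconnected)
    (V : Set (α × γ)) (p : ℕ) (hp : p ≤ Nat.card γ)
    (hocc : p ≤ {u | ∃ i, (u, i) ∈ V}.ncard) (hunocc : ∃ w, ∀ i, (w, i) ∉ V) :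
    ∃ f : Fin p → (α × γ) × (α × γ),
      IsMatchingFun (G □ H) f ∧ ∀ j, (f j).1 ∈ V ∧ (f j).2 ∉ V := by
  classical
  have := Fintype.ofFinite (α × γ)
  obtain ⟨f, g, hfg⟩ := Fintype.exists_matching_of_no_small_vertexCover
    (fun (a : V) (b : ↥Vᶜ) => (G □ H).Adj a b) p <| by
      intro A B hAB
      have hS : #(A.map (.subtype _) ∪ B.map (.subtype _)) < p :=
        (card_union_le _ _).trans_lt (by simpa using hAB)
      obtain ⟨x, y, hxy, hx, hy, hxS, hyS⟩ := boxProd_exists_adj_mem_notMem_avoiding hG hH V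
        hunocc _ (hS.trans_le hocc) (hS.trans_le hp)
      exact ⟨⟨x, hx⟩, fun h => hxS (mem_union_left _ (mem_map_of_mem _ h)),
        ⟨y, hy⟩, fun h => hyS (mem_union_right _ (mem_map_of_mem _ h)), hxy⟩
  exact ⟨_, isMatchingFun_of_embedding f g hfg, fun j => ⟨(f j).2, (g j).2⟩⟩

instance (h : ℕ) : Finite (TernV h) := (List.finite_length_le (Fin 3) h).to_subtype

theorem ternaryTree_reachable_root (h : ℕ) (v : TernV h) :
    (ternaryTree h).Reachable v ⟨[], by simp⟩ := by
  obtain ⟨l, hl⟩ := v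
  induction l using List.reverseRecOn with
  | nil => rfl
  | append_singleton l a ih =>
    have hl' : l.length ≤ h := by
      simp only [List.length_append, List.length_singleton] at hl; omega
    have hadj : (ternaryTree h).Adj ⟨l ++ [a], hl⟩ ⟨l, hl'⟩ := by
      refine (SimpleGraph.fromRel_adj _ _ _).2 ⟨fun heq => ?_, Or.inr ⟨a, rfl⟩⟩
      simpa using congrArg (fun x => x.1.length) heq
    exact hadj.reachable.trans (ih hl')

theorem ternaryTree_preconnected (h : ℕ) : (ternaryTree h).Preconnected := fun u v =>
  (ternaryTree_reachable_root h u).trans (ternaryTree_reachable_root h v).symm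

/-- Lemma `goodpart1`: if at least `p` vertices of the complete ternary tree `T`
are occupied by `V ⊆ V(T(H))` and some vertex is unoccupied, then `T(H) = T □ H`
has a matching of size `p` with one end of every edge in `V` and the other outside `V`. -/
theorem stmt3 {γ : Type*} (h p : ℕ) (H : SimpleGraph γ) (hH : H.Connected)
    (hHcard : p ≤ Nat.card γ)
    (V : Set (TernV h × γ))
    (hocc : p ≤ Set.ncard {u : TernV h | ∃ i, (u, i) ∈ V})
    (hunocc : ∃ u : TernV h, ∀ i, (u, i) ∉ V) :
    ∃ f : Fin p → (TernV h × γ) × (TernV h × γ),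
      IsMatchingFun ((ternaryTree h).boxProd H) f ∧
      ∀ j, (f j).1 ∈ V ∧ (f j).2 ∉ V := by
  rcases p.eq_zero_or_pos with rfl | hp
  · exact ⟨Fin.elim0, ⟨fun i => i.elim0, fun i => i.elim0⟩, fun i => i.elim0⟩
  have : Finite γ := (Nat.card_pos_iff.1 (hp.trans_le hHcard)).2
  exact SimpleGraph.boxProd_exists_matching_mem_notMem (ternaryTree_preconnected h)
    hH.preconnected V p hHcard hocc hunocc
end

section
/- If T₁,…,T_q is a minimal sequence of largest immediate subtrees of a complete rooted ternary tree T with respect to V lacking p (i.e., |OC(T₁,V₁)| − |OC(T_q,V_q)| ≥ p but |OC(T₁,V₁)| − |OC(T_{q−1},V_{q−1})| < p), then |OC(T_q,V_q)| ≥ (|OC(T₁,V₁)| − p)/3. -/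
/-- The number of vertices of the subtree rooted at `w` occupied by `V`. -/
noncomputable def OCc {h : ℕ} {γ : Type*} (V : Set (TernV h × γ)) (w : List (Fin 3)) : ℕ :=
  Set.ncard {u : TernV h | w <+: u.1 ∧ ∃ i, (u, i) ∈ V}

/-!
Every occupied vertex of the subtree at `w` is either its root or lies in one of the three
child subtrees, so `|OC(w)| ≤ 1 + 3 |OC(w')|` whenever `w'` is a largest child of `w`.
Applied to the last step `T_{q-1} → T_q`, together with minimality
`|OC(T₁)| - |OC(T_{q-1})| < p`, this gives `|OC(T₁)| ≤ 3 |OC(T_q)| + p`.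
-/

instance TernV.finite (h : ℕ) : Finite (TernV h) :=
  (List.finite_length_le (Fin 3) h).to_subtype

section

variable {h : ℕ} {γ : Type*} (V : Set (TernV h × γ))

lemma OCc_le_one_add_sum_children (w : List (Fin 3)) :
    OCc V w ≤ 1 + ∑ j : Fin 3, OCc V (w ++ [j]) := by
  have hsub : {u : TernV h | w <+: u.1 ∧ ∃ i, (u, i) ∈ V} ⊆
      {u : TernV h | u.1 = w} ∪ ⋃ j : Fin 3, {u : TernV h | w ++ [j] <+: u.1 ∧ ∃ i, (u, i) ∈ V} := by
    rintro u ⟨⟨t, ht⟩, hocc⟩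
    cases t with
    | nil => exact Or.inl (by simpa using ht.symm)
    | cons j t => exact Or.inr (Set.mem_iUnion.mpr ⟨j, ⟨t, by simpa using ht⟩, hocc⟩)
  have hroot : {u : TernV h | u.1 = w}.ncard ≤ 1 :=
    (Set.ncard_le_one_iff).mpr fun ha hb => Subtype.ext (ha.trans hb.symm)
  calc OCc V w ≤ _ := Set.ncard_le_ncard hsub
    _ ≤ _ := Set.ncard_union_le _ _
    _ ≤ 1 + ∑ j : Fin 3, OCc V (w ++ [j]) :=
      add_le_add hroot (Set.ncard_iUnion_le_of_fintype _)

lemma OCc_le_one_add_three_mul_of_forall_child_le {w w' : List (Fin 3)}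
    (hmax : ∀ j : Fin 3, OCc V (w ++ [j]) ≤ OCc V w') :
    OCc V w ≤ 1 + 3 * OCc V w' := by
  calc OCc V w ≤ 1 + ∑ j : Fin 3, OCc V (w ++ [j]) := OCc_le_one_add_sum_children V w
    _ ≤ 1 + ∑ _j : Fin 3, OCc V w' := by gcongr with j; exact hmax j
    _ = 1 + 3 * OCc V w' := by simp

end

/-- The sequence of subtrees `T₁, …, T_q` is encoded by the sequence `ws` of their roots. -/
theorem stmt5 {γ : Type*} (h p n : ℕ) (V : Set (TernV h × γ))
    (ws : Fin (n + 2) → List (Fin 3))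
    (hmaxstep : ∀ i : Fin (n + 1), ∀ j : Fin 3,
      OCc V (ws i.castSucc ++ [j]) ≤ OCc V (ws i.succ))
    (hmin : OCc V (ws 0) < OCc V (ws ⟨n, by omega⟩) + p) :
    ((OCc V (ws 0) : ℚ) - p) / 3 ≤ (OCc V (ws (Fin.last (n + 1))) : ℚ) := by
  have hlast : OCc V (ws ⟨n, by omega⟩) ≤ 1 + 3 * OCc V (ws (Fin.last (n + 1))) :=
    OCc_le_one_add_three_mul_of_forall_child_le V (hmaxstep (Fin.last n))
  have hnat : OCc V (ws 0) ≤ 3 * OCc V (ws (Fin.last (n + 1))) + p := by omega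
  rw [div_le_iff₀ (by norm_num)]
  have hq : (OCc V (ws 0) : ℚ) ≤ 3 * OCc V (ws (Fin.last (n + 1))) + p := by exact_mod_cast hnat
  linarith
end

section
/- Let G be a graph without isolated vertices, φ(G) the monotone 2-CNF with a clause (u ∨ v) for each edge {u,v}, F a Boolean function with F ⊆ φ(G) (as sets of satisfying assignments), and Z a NROBP representing F. Let u be a vertex of Z and M = {{x₁,y₁},…,{x_q,y_q}} a matching of G such that {x₁,…,x_q} and {y₁,…,y_q} are separated by u (all of one side occur before u and all of the other side occur after u on every source-sink path through u). Then there is a set X of q vertices containing exactly one vertex from each edge {x_i,y_i} such that every source-sink path P of Z through u has X ⊆ A(P), i.e., all variables of X occur positively on P. -/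
/-!
Fix an edge `ab` of `G` with `a` before and `b` after `u`. A source-sink path reads off the
assignment `σ` of its literals, which lies in `F ⊆ φ(G)`; so no source-sink path carries both
`¬a` and `¬b`. If some prefix `P₁` into `u` carries `¬a`, then every suffix `P₂` out of `u`
carries `b` positively, since `P₁ P₂` is a source-sink path. Otherwise every prefix carries `a`
positively. Choosing `a` or `b` accordingly for each matching edge gives `X`.
-/

/-- `DWalk E a b es`: `es` is the list of edges of a directed walk from `a` to `b`
in the directed graph with edge relation `E`. -/
inductive DWalk {ν : Type*} (E : ν → ν → Prop) : ν → ν → List (ν × ν) → Prop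
  | nil (a : ν) : DWalk E a a []
  | cons {a b c : ν} {l : List (ν × ν)} :
      E a b → DWalk E b c l → DWalk E a c ((a, b) :: l)

theorem DWalk.append {ν : Type*} {E : ν → ν → Prop} {a b c : ν}
    {l l' : List (ν × ν)} (h : DWalk E a b l) (h' : DWalk E b c l') :
    DWalk E a c (l ++ l') := by
  induction h with
  | nil => simpa using h'
  | cons he _ ih => exact DWalk.cons he (ih h')

section ReadOnce

variable {ν α : Type*} {label : ν → ν → Option (α × Bool)} {es : List (ν × ν)} {v : α}

theorem bool_eq_of_label_eq_some_of_readOnce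
    (huniq : ∀ e ∈ es, ∀ e' ∈ es, (∃ b, label e.1 e.2 = some (v, b)) →
      (∃ b, label e'.1 e'.2 = some (v, b)) → e = e')
    {e e' : ν × ν} {b b' : Bool} (he : e ∈ es) (hl : label e.1 e.2 = some (v, b))
    (he' : e' ∈ es) (hl' : label e'.1 e'.2 = some (v, b')) : b = b' := by
  obtain rfl := huniq e he e' he' ⟨b, hl⟩ ⟨b', hl'⟩
  rw [hl] at hl'
  simpa using hl'

variable (label es) in
noncomputable def pathAssignment (v : α) : Bool :=
  open Classical in decide (∃ e ∈ es, label e.1 e.2 = some (v, true))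

theorem pathAssignment_eq_true_iff :
    pathAssignment label es v = true ↔ ∃ e ∈ es, label e.1 e.2 = some (v, true) := by
  simp [pathAssignment]

theorem pathAssignment_eq_false
    (huniq : ∀ e ∈ es, ∀ e' ∈ es, (∃ b, label e.1 e.2 = some (v, b)) →
      (∃ b, label e'.1 e'.2 = some (v, b)) → e = e')
    {e : ν × ν} (he : e ∈ es) (hl : label e.1 e.2 = some (v, false)) :
    pathAssignment label es v = false := by
  rw [← Bool.not_eq_true, pathAssignment_eq_true_iff]
  rintro ⟨e', he', hl'⟩
  exact absurd (bool_eq_of_label_eq_some_of_readOnce huniq he hl he' hl') Bool.false_ne_true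

theorem exists_label_pathAssignment (hocc : ∃ e ∈ es, ∃ b, label e.1 e.2 = some (v, b))
    (huniq : ∀ e ∈ es, ∀ e' ∈ es, (∃ b, label e.1 e.2 = some (v, b)) →
      (∃ b, label e'.1 e'.2 = some (v, b)) → e = e') :
    ∃ e ∈ es, label e.1 e.2 = some (v, pathAssignment label es v) := by
  obtain ⟨e, he, b, hl⟩ := hocc
  refine ⟨e, he, ?_⟩
  cases b with
  | true => rwa [(pathAssignment_eq_true_iff.mpr ⟨e, he, hl⟩)]
  | false => rwa [pathAssignment_eq_false huniq he hl]

end ReadOnce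

section Separation

variable {ν α : Type*} {E : ν → ν → Prop} {label : ν → ν → Option (α × Bool)} {source sink : ν}

theorem not_neg_and_neg_of_adj (G : SimpleGraph α)
    (hro : ∀ (x : α) (es : List (ν × ν)), DWalk E source sink es →
      (∃ e ∈ es, ∃ b, label e.1 e.2 = some (x, b)) ∧
      ∀ e ∈ es, ∀ e' ∈ es,
        (∃ b, label e.1 e.2 = some (x, b)) → (∃ b, label e'.1 e'.2 = some (x, b)) → e = e')
    {F : Set (α → Bool)}
    (hrep : ∀ σ : α → Bool, σ ∈ F ↔
      ∃ es, DWalk E source sink es ∧ ∀ x, ∃ e ∈ es, label e.1 e.2 = some (x, σ x))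
    (hsub : ∀ σ ∈ F, ∀ a b : α, G.Adj a b → (σ a = true ∨ σ b = true))
    {a b : α} (hab : G.Adj a b) :
    ∀ es, DWalk E source sink es → ∀ ea ∈ es, ∀ eb ∈ es,
      label ea.1 ea.2 = some (a, false) → label eb.1 eb.2 = some (b, false) → False := by
  intro es hw ea hea eb heb hla hlb
  have hσF : pathAssignment label es ∈ F :=
    (hrep _).mpr ⟨es, hw, fun v => exists_label_pathAssignment (hro v es hw).1 (hro v es hw).2⟩
  rcases hsub _ hσF a b hab with hσa | hσb
  · simp [pathAssignment_eq_false (hro a es hw).2 hea hla] at hσa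
  · simp [pathAssignment_eq_false (hro b es hw).2 heb hlb] at hσb

theorem exists_forall_positive_of_separated {u : ν} {a b : α}
    (hpair : ∀ es, DWalk E source sink es → ∀ ea ∈ es, ∀ eb ∈ es,
      label ea.1 ea.2 = some (a, false) → label eb.1 eb.2 = some (b, false) → False)
    (hsep : ∀ es₁ es₂, DWalk E source u es₁ → DWalk E u sink es₂ →
      (∃ e ∈ es₁, ∃ c, label e.1 e.2 = some (a, c)) ∧
      (∃ e ∈ es₂, ∃ c, label e.1 e.2 = some (b, c))) :
    ∃ c, (c = a ∨ c = b) ∧ ∀ es₁ es₂, DWalk E source u es₁ → DWalk E u sink es₂ →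
      ∃ e ∈ es₁ ++ es₂, label e.1 e.2 = some (c, true) := by
  by_cases hpos : ∀ es₁, DWalk E source u es₁ → ∃ e ∈ es₁, label e.1 e.2 = some (a, true)
  · refine ⟨a, .inl rfl, fun es₁ _ h₁ _ => ?_⟩
    obtain ⟨e, he, hl⟩ := hpos es₁ h₁
    exact ⟨e, List.mem_append_left _ he, hl⟩
  push Not at hpos
  obtain ⟨es₁, h₁, hnot⟩ := hpos
  refine ⟨b, .inr rfl, fun _ es₂ _ h₂ => ?_⟩
  obtain ⟨⟨ea, hea, ca, hla⟩, ⟨eb, heb, cb, hlb⟩⟩ := hsep es₁ es₂ h₁ h₂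
  obtain rfl : ca = false := by
    cases ca
    · rfl
    · exact absurd hla (hnot ea hea)
  cases cb with
  | true => exact ⟨eb, List.mem_append_right _ heb, hlb⟩
  | false =>
    exact (hpair _ (h₁.append h₂) ea (List.mem_append_left _ hea) eb
      (List.mem_append_right _ heb) hla hlb).elim

end Separation

theorem stmt10_general {ν α : Type*} (G : SimpleGraph α)
    (E : ν → ν → Prop) (label : ν → ν → Option (α × Bool)) (source sink : ν)
    (hro : ∀ (x : α) (es : List (ν × ν)), DWalk E source sink es →
      (∃ e ∈ es, ∃ b, label e.1 e.2 = some (x, b)) ∧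
      ∀ e ∈ es, ∀ e' ∈ es,
        (∃ b, label e.1 e.2 = some (x, b)) → (∃ b, label e'.1 e'.2 = some (x, b)) → e = e')
    (F : Set (α → Bool))
    (hrep : ∀ σ : α → Bool, σ ∈ F ↔
      ∃ es, DWalk E source sink es ∧ ∀ x, ∃ e ∈ es, label e.1 e.2 = some (x, σ x))
    (hsub : ∀ σ ∈ F, ∀ a b : α, G.Adj a b → (σ a = true ∨ σ b = true))
    (q : ℕ) (x y : Fin q → α)
    (hM : ∀ i, G.Adj (x i) (y i))
    (u : ν)
    (hsep :
      (∀ es₁ es₂, DWalk E source u es₁ → DWalk E u sink es₂ →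
        ∀ i, (∃ e ∈ es₁, ∃ b, label e.1 e.2 = some (x i, b)) ∧
             (∃ e ∈ es₂, ∃ b, label e.1 e.2 = some (y i, b))) ∨
      (∀ es₁ es₂, DWalk E source u es₁ → DWalk E u sink es₂ →
        ∀ i, (∃ e ∈ es₁, ∃ b, label e.1 e.2 = some (y i, b)) ∧
             (∃ e ∈ es₂, ∃ b, label e.1 e.2 = some (x i, b)))) :
    ∃ X : Fin q → α, (∀ i, X i = x i ∨ X i = y i) ∧
      ∀ es₁ es₂, DWalk E source u es₁ → DWalk E u sink es₂ →
        ∀ i, ∃ e ∈ es₁ ++ es₂, label e.1 e.2 = some (X i, true) := by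
  have hpair {a b : α} (hab : G.Adj a b) := not_neg_and_neg_of_adj G hro hrep hsub hab
  rcases hsep with h | h
  · choose X hX hpos using fun i =>
      exists_forall_positive_of_separated (hpair (hM i)) fun es₁ es₂ h₁ h₂ => h es₁ es₂ h₁ h₂ i
    exact ⟨X, hX, fun es₁ es₂ h₁ h₂ i => hpos i es₁ es₂ h₁ h₂⟩
  · choose X hX hpos using fun i =>
      exists_forall_positive_of_separated (hpair (hM i).symm)
        fun es₁ es₂ h₁ h₂ => h es₁ es₂ h₁ h₂ i
    exact ⟨X, fun i => (hX i).symm, fun es₁ es₂ h₁ h₂ i => hpos i es₁ es₂ h₁ h₂⟩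

/-- Proposition `fixedset`: if a NROBP `Z` represents `F ⊆ φ(G)` and a matching
`{x_i, y_i}` of `G` has its two sides separated by a vertex `u` of `Z`, then there
is a set `X` containing one end of each matching edge such that every source-sink
path through `u` contains all variables of `X` positively. -/
theorem stmt10 {ν α : Type*} (G : SimpleGraph α)
    (hiso : ∀ a : α, ∃ b, G.Adj a b)
    (E : ν → ν → Prop) (label : ν → ν → Option (α × Bool)) (source sink : ν)
    (rank : ν → ℕ) (hdag : ∀ a b, E a b → rank a < rank b)
    (hro : ∀ (x : α) (es : List (ν × ν)), DWalk E source sink es →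
      (∃ e ∈ es, ∃ b, label e.1 e.2 = some (x, b)) ∧
      ∀ e ∈ es, ∀ e' ∈ es,
        (∃ b, label e.1 e.2 = some (x, b)) → (∃ b, label e'.1 e'.2 = some (x, b)) → e = e')
    (F : Set (α → Bool))
    (hrep : ∀ σ : α → Bool, σ ∈ F ↔
      ∃ es, DWalk E source sink es ∧ ∀ x, ∃ e ∈ es, label e.1 e.2 = some (x, σ x))
    (hsub : ∀ σ ∈ F, ∀ a b : α, G.Adj a b → (σ a = true ∨ σ b = true))
    (q : ℕ) (x y : Fin q → α)
    (hM : ∀ i, G.Adj (x i) (y i))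
    (hMdisj : ∀ i j, i ≠ j → x i ≠ x j ∧ x i ≠ y j ∧ y i ≠ x j ∧ y i ≠ y j)
    (u : ν)
    (hsep :
      (∀ es₁ es₂, DWalk E source u es₁ → DWalk E u sink es₂ →
        ∀ i, (∃ e ∈ es₁, ∃ b, label e.1 e.2 = some (x i, b)) ∧
             (∃ e ∈ es₂, ∃ b, label e.1 e.2 = some (y i, b))) ∨
      (∀ es₁ es₂, DWalk E source u es₁ → DWalk E u sink es₂ →
        ∀ i, (∃ e ∈ es₁, ∃ b, label e.1 e.2 = some (y i, b)) ∧
             (∃ e ∈ es₂, ∃ b, label e.1 e.2 = some (x i, b)))) :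
    ∃ X : Fin q → α, (∀ i, X i = x i ∨ X i = y i) ∧
      ∀ es₁ es₂, DWalk E source u es₁ → DWalk E u sink es₂ →
        ∀ i, ∃ e ∈ es₁ ++ es₂, label e.1 e.2 = some (X i, true) :=
  stmt10_general G E label source sink hro F hrep hsub q x y hM u hsep
end

section
/- Let G be a graph, φ(G) the monotone 2-CNF of G, u a node of a decision tree T for φ(G) labelled by variable x, and A_u the partial assignment on the root-to-u path. Suppose x is not forced to 1 by A_u (no neighbour of x occurs negatively in A_u). Let F^u = φ(G)|_{A_u} and let N^u(x) be the set of neighbours of x neither assigned by A_u nor forced to 1 by A_u. Then |F^u|_{¬x}| / |F^u| ≥ (1/2)^{|N^u(x)|+1} and |F^u|_x| / |F^u| ≥ 1/2. -/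
/-!
Raising `x` to `1` is injective on the models of `F^u` with `x = 0` and keeps them models, so
`|F^u|_{¬x}| ≤ |F^u|_x|`. Conversely, sending a model with `x = 1` to the one obtained by setting
`x` to `0` and every free neighbour of `x` to `1` gives a model again, because every other
neighbour of `x` is already `1` (it is assigned `1`, as `x` is not forced, or forced to `1`).
Its fibres have at most `2 ^ |N^u(x)|` elements, so `|F^u|_x| ≤ 2 ^ |N^u(x)| · |F^u|_{¬x}|`.
-/

open Function

section Counting

variable {α β : Type*} [Finite α]

lemma ncard_le_pow_mul_ncard [Finite β] {S T : Set (α → β)} (N : Set α)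
    (f : (α → β) → α → β) (hf : Set.MapsTo f S T)
    (hfib : ∀ σ ∈ S, ∀ τ ∈ S, f σ = f τ → ∀ y ∉ N, σ y = τ y) :
    S.ncard ≤ Nat.card β ^ N.ncard * T.ncard := by
  let g : S → T × (N → β) := fun σ => (⟨f σ, hf σ.2⟩, fun y => σ.1 y)
  have hg : Injective g := by
    rintro ⟨σ, hσ⟩ ⟨τ, hτ⟩ hστ
    simp only [g, Prod.mk.injEq, Subtype.mk.injEq] at hστ
    ext y
    by_cases hy : y ∈ N
    · exact congrFun hστ.2 ⟨y, hy⟩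
    · exact hfib σ hσ τ hτ hστ.1 y hy
  have := Nat.card_le_card_of_injective g hg
  rwa [Nat.card_prod, Nat.card_fun, Nat.card_coe_set_eq, Nat.card_coe_set_eq,
    Nat.card_coe_set_eq, mul_comm] at this

lemma ncard_false_le_ncard_true [DecidableEq α] {F : Set (α → Bool)} {x : α}
    (hF : ∀ σ ∈ F, update σ x true ∈ F) :
    {σ ∈ F | σ x = false}.ncard ≤ {σ ∈ F | σ x = true}.ncard := by
  refine Set.ncard_le_ncard_of_injOn (update · x true)
    (fun σ hσ => ⟨hF σ hσ.1, update_self x true σ⟩) ?_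
  rintro σ ⟨-, hσx⟩ τ ⟨-, hτx⟩ hστ
  ext y
  by_cases hy : y = x
  · rw [hy, hσx, hτx]
  · simpa [update_of_ne hy] using congrFun hστ y

lemma ncard_eq_ncard_true_add_ncard_false (F : Set (α → Bool)) (x : α) :
    F.ncard = {σ ∈ F | σ x = true}.ncard + {σ ∈ F | σ x = false}.ncard := by
  rw [← Set.ncard_inter_add_ncard_sdiff_eq_ncard F {σ | σ x = true}]
  congr 2
  ext σ
  simp

end Counting

section Ratio

variable {𝕜 : Type*} [Field 𝕜] [LinearOrder 𝕜] [IsStrictOrderedRing 𝕜]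

lemma half_le_div_add {a b : 𝕜} (ha : 0 < a) (hb : 0 ≤ b) (hba : b ≤ a) :
    1 / 2 ≤ a / (a + b) := by
  rw [le_div_iff₀ (by positivity)]
  linarith

lemma half_pow_succ_le_div_add {a b : 𝕜} (n : ℕ) (ha : 0 ≤ a) (hb : 0 < b)
    (hab : a ≤ 2 ^ n * b) : (1 / 2) ^ (n + 1) ≤ b / (a + b) := by
  have hb_le : b ≤ 2 ^ n * b := le_mul_of_one_le_left hb.le (one_le_pow₀ one_le_two)
  rw [le_div_iff₀ (by positivity)]
  calc (1 / 2) ^ (n + 1) * (a + b) ≤ (1 / 2) ^ (n + 1) * (2 ^ (n + 1) * b) := by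
        gcongr
        rw [pow_succ]
        linarith
    _ = b := by rw [← mul_assoc, ← mul_pow]; norm_num

end Ratio

namespace Monotone2CNF

variable {α : Type*} (G : SimpleGraph α) (A : Set (α × Bool))

/-- `F^u = φ(G)|_A`, encoded by its models extended by the values `A` fixes; this is a bijection,
so all counts agree. -/
def restrictModels : Set (α → Bool) :=
  {σ | (∀ a b : α, G.Adj a b → (σ a = true ∨ σ b = true)) ∧ ∀ p ∈ A, σ p.1 = p.2}

def ForcedTrue (y : α) : Prop := ∃ z, G.Adj y z ∧ (z, false) ∈ A

def freeNeighbors (x : α) : Set α :=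
  {y | G.Adj x y ∧ (∀ b, (y, b) ∉ A) ∧ ¬ ForcedTrue G A y}

open Classical in
noncomputable def pinFalseTrue (x : α) (N : Set α) (σ : α → Bool) : α → Bool :=
  update (N.piecewise (fun _ => true) σ) x false

variable {G A}

lemma update_true_mem_restrictModels [DecidableEq α] {σ : α → Bool} {x : α}
    (hσ : σ ∈ restrictModels G A) (hx : ∀ b, (x, b) ∉ A) :
    update σ x true ∈ restrictModels G A := by
  refine ⟨fun a b hab => ?_, fun p hp => ?_⟩
  · by_cases ha : a = x
    · simp [ha]
    by_cases hb : b = x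
    · simp [hb]
    simpa [update_of_ne ha, update_of_ne hb] using hσ.1 a b hab
  · have hpx : p.1 ≠ x := by rintro rfl; exact hx p.2 hp
    rw [update_of_ne hpx]
    exact hσ.2 p hp

lemma eq_true_of_adj_of_notMem_freeNeighbors {σ : α → Bool} {x y : α}
    (hσ : σ ∈ restrictModels G A) (hx : ¬ ForcedTrue G A x) (hxy : G.Adj x y)
    (hy : y ∉ freeNeighbors G A x) : σ y = true := by
  by_cases hassigned : ∃ b, (y, b) ∈ A
  · obtain ⟨b, hb⟩ := hassigned
    cases b
    · exact absurd ⟨y, hxy, hb⟩ hx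
    · exact hσ.2 _ hb
  · obtain ⟨z, hyz, hz⟩ : ForcedTrue G A y := by
      by_contra hnf
      exact hy ⟨hxy, fun b hb => hassigned ⟨b, hb⟩, hnf⟩
    have hσz : σ z = false := hσ.2 _ hz
    simpa [hσz] using hσ.1 y z hyz

lemma pinFalseTrue_apply_self (x : α) (N : Set α) (σ : α → Bool) :
    pinFalseTrue x N σ x = false := by
  simp [pinFalseTrue]

lemma pinFalseTrue_apply_of_notMem {x y : α} {N : Set α} (σ : α → Bool) (hyx : y ≠ x)
    (hyN : y ∉ N) : pinFalseTrue x N σ y = σ y := by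
  simp [pinFalseTrue, hyx, hyN]

lemma pinFalseTrue_mem_restrictModels {σ : α → Bool} {x : α} (hσ : σ ∈ restrictModels G A)
    (hxA : ∀ b, (x, b) ∉ A) (hx : ¬ ForcedTrue G A x) :
    pinFalseTrue x (freeNeighbors G A x) σ ∈ restrictModels G A := by
  set N := freeNeighbors G A x
  have hmono : ∀ y ≠ x, σ y = true → pinFalseTrue x N σ y = true := by
    intro y hyx hy
    by_cases hyN : y ∈ N
    · simp [pinFalseTrue, hyx, hyN]
    · rwa [pinFalseTrue_apply_of_notMem σ hyx hyN]
  have hnbr : ∀ y, G.Adj x y → pinFalseTrue x N σ y = true := by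
    intro y hxy
    have hyx : y ≠ x := hxy.ne.symm
    by_cases hyN : y ∈ N
    · simp [pinFalseTrue, hyx, hyN]
    · exact hmono y hyx (eq_true_of_adj_of_notMem_freeNeighbors hσ hx hxy hyN)
  refine ⟨fun a b hab => ?_, fun p hp => ?_⟩
  · by_cases ha : a = x
    · exact .inr (hnbr b (ha ▸ hab))
    by_cases hb : b = x
    · exact .inl (hnbr a (hb ▸ hab.symm))
    exact (hσ.1 a b hab).imp (hmono a ha) (hmono b hb)
  · have hpx : p.1 ≠ x := by rintro rfl; exact hxA p.2 hp
    have hpN : p.1 ∉ N := fun hpN => hpN.2.1 p.2 hp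
    rw [pinFalseTrue_apply_of_notMem σ hpx hpN]
    exact hσ.2 p hp

lemma ncard_true_le_two_pow_mul_ncard_false [Finite α] {x : α} (hxA : ∀ b, (x, b) ∉ A)
    (hx : ¬ ForcedTrue G A x) :
    {σ ∈ restrictModels G A | σ x = true}.ncard ≤
      2 ^ (freeNeighbors G A x).ncard * {σ ∈ restrictModels G A | σ x = false}.ncard := by
  set N := freeNeighbors G A x
  have hmaps : Set.MapsTo (pinFalseTrue x N) {σ ∈ restrictModels G A | σ x = true}
      {σ ∈ restrictModels G A | σ x = false} := fun σ hσ =>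
    ⟨pinFalseTrue_mem_restrictModels hσ.1 hxA hx, pinFalseTrue_apply_self x N σ⟩
  have hfib : ∀ σ ∈ {σ ∈ restrictModels G A | σ x = true},
      ∀ τ ∈ {σ ∈ restrictModels G A | σ x = true},
      pinFalseTrue x N σ = pinFalseTrue x N τ → ∀ y ∉ N, σ y = τ y := by
    rintro σ ⟨-, hσx⟩ τ ⟨-, hτx⟩ hστ y hyN
    by_cases hyx : y = x
    · rw [hyx, hσx, hτx]
    · simpa [pinFalseTrue_apply_of_notMem _ hyx hyN] using congrFun hστ y
  simpa using ncard_le_pow_mul_ncard N _ hmaps hfib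

end Monotone2CNF

open Monotone2CNF

/-- Lemma `largeportion`: let `A` be the partial assignment on the root-to-`u` path of a
decision tree for `φ(G)`, let `x` be the (unassigned) variable labelling `u`, not forced
to `1` by `A`, let `F^u = φ(G)|_A` (nonzero) and `N^u(x)` the neighbours of `x` neither
assigned nor forced to `1` by `A`. Then `|F^u|_{¬x}|/|F^u| ≥ (1/2)^{|N^u(x)|+1}` and
`|F^u|_x|/|F^u| ≥ 1/2`. -/
theorem stmt13 {α : Type*} [Fintype α] (G : SimpleGraph α)
    (A : Set (α × Bool)) (x : α)
    (hxun : ∀ b, (x, b) ∉ A)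
    (hxnf : ¬ ∃ z, G.Adj x z ∧ (z, false) ∈ A)
    (Fu : Set (α → Bool))
    (hFu : Fu = {σ | (∀ a b : α, G.Adj a b → (σ a = true ∨ σ b = true)) ∧
                     ∀ p ∈ A, σ p.1 = p.2})
    (hne : Fu.Nonempty)
    (N : Set α)
    (hN : N = {y | G.Adj x y ∧ (∀ b, (y, b) ∉ A) ∧ ¬ ∃ z, G.Adj y z ∧ (z, false) ∈ A}) :
    ((1 : ℚ) / 2) ^ (N.ncard + 1) ≤ (Set.ncard {σ ∈ Fu | σ x = false} : ℚ) / Set.ncard Fu ∧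
    (1 : ℚ) / 2 ≤ (Set.ncard {σ ∈ Fu | σ x = true} : ℚ) / Set.ncard Fu := by
  classical
  obtain rfl : Fu = restrictModels G A := hFu
  obtain rfl : N = freeNeighbors G A x := hN
  obtain ⟨σ, hσ⟩ := hne
  have hfalse_pos : 0 < {τ ∈ restrictModels G A | τ x = false}.ncard :=
    (Set.ncard_pos).2
      ⟨_, pinFalseTrue_mem_restrictModels hσ hxun hxnf, pinFalseTrue_apply_self _ _ _⟩
  have hfalse_le := ncard_false_le_ncard_true (F := restrictModels G A)
    fun τ hτ => update_true_mem_restrictModels hτ hxun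
  have htrue_le := ncard_true_le_two_pow_mul_ncard_false (G := G) hxun hxnf
  rw [ncard_eq_ncard_true_add_ncard_false (restrictModels G A) x]
  push_cast
  exact ⟨half_pow_succ_le_div_add _ (Nat.cast_nonneg _) (by exact_mod_cast hfalse_pos)
      (by exact_mod_cast htrue_le),
    half_le_div_add (by exact_mod_cast hfalse_pos.trans_le hfalse_le) (Nat.cast_nonneg _)
      (by exact_mod_cast hfalse_le)⟩
end

section
/- For each degree bound d there is a constant b_d > 1 such that: for every graph G of maximum degree d and every U ⊆ V(G), the number of satisfying assignments of φ(G) that set all variables of U to true is at most |φ(G)| / 2^{|U|/b_d}. -/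
/-!
Write `C(U)` for the covers containing `U`, and let `u ∉ U`. Setting `u` false and all
neighbours of `u` true maps `C(U ∪ {u})` into `C(U) \ C(U ∪ {u})`, and this map is at most
`2^d`-to-one because only the values on the neighbours of `u` are forgotten. Hence
`(2^d + 1) |C(U ∪ {u})| ≤ 2^d |C(U)|`, and iterating,
`|C(U)| ≤ (2^d / (2^d + 1))^|U| |φ(G)|`. Bernoulli's inequality `2^(1/b) ≤ 1 + 1/b` turns
this into the claimed bound with `b = 2^d + 1`.
-/

namespace SimpleGraph

variable {V : Type} (G : SimpleGraph V)

def IsCoverAssignment (σ : V → Bool) : Prop :=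
  ∀ a b, G.Adj a b → σ a = true ∨ σ b = true

def coversContaining (U : Set V) : Set (V → Bool) :=
  {σ | G.IsCoverAssignment σ ∧ ∀ u ∈ U, σ u = true}

def uncover [DecidableEq V] [DecidableRel G.Adj] (u : V) (σ : V → Bool) : V → Bool :=
  fun v => if v = u then false else if G.Adj u v then true else σ v

variable {G}

lemma coversContaining_mono {U W : Set V} (h : U ⊆ W) :
    G.coversContaining W ⊆ G.coversContaining U :=
  fun _ hσ => ⟨hσ.1, fun u hu => hσ.2 u (h hu)⟩

lemma isCoverAssignment_uncover [DecidableEq V] [DecidableRel G.Adj] {σ : V → Bool} (u : V)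
    (hσ : G.IsCoverAssignment σ) : G.IsCoverAssignment (G.uncover u σ) := by
  intro x y hxy
  have := hσ x y hxy
  grind [uncover, G.ne_of_adj hxy, hxy.symm]

lemma uncover_mem_diff [DecidableEq V] [DecidableRel G.Adj] {U : Set V} {u : V} (hu : u ∉ U)
    {σ : V → Bool} (hσ : σ ∈ G.coversContaining (insert u U)) :
    G.uncover u σ ∈ G.coversContaining U \ G.coversContaining (insert u U) := by
  refine ⟨⟨isCoverAssignment_uncover u hσ.1, fun x hx => ?_⟩, fun h => ?_⟩
  · have hxu : x ≠ u := fun h => hu (h ▸ hx)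
    simp [uncover, hxu, hσ.2 x (Set.mem_insert_of_mem u hx)]
  · simpa [uncover] using h.2 u (Set.mem_insert u U)

lemma injOn_uncover_prod_restrict [DecidableEq V] [DecidableRel G.Adj] (u : V) :
    Set.InjOn (fun σ => (G.uncover u σ, fun w : G.neighborSet u => σ w)) {σ | σ u = true} := by
  intro σ hσ τ hτ h
  simp only [Prod.mk.injEq, funext_iff, Subtype.forall, mem_neighborSet] at h
  funext v
  by_cases hv : v = u
  · subst hv; rw [hσ, hτ]
  by_cases hadj : G.Adj u v
  · exact h.2 v hadj
  · simpa [uncover, hv, hadj] using h.1 v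

variable [Finite V]

lemma ncard_coversContaining_insert_le {U : Set V} {u : V} {d : ℕ} (hu : u ∉ U)
    (hdeg : (G.neighborSet u).ncard ≤ d) :
    (G.coversContaining (insert u U)).ncard ≤
      (G.coversContaining U \ G.coversContaining (insert u U)).ncard * 2 ^ d := by
  classical
  calc (G.coversContaining (insert u U)).ncard
      ≤ ((G.coversContaining U \ G.coversContaining (insert u U)) ×ˢ
          (Set.univ : Set (G.neighborSet u → Bool))).ncard :=
        Set.ncard_le_ncard_of_injOn _
          (fun σ hσ => ⟨uncover_mem_diff hu hσ, Set.mem_univ _⟩)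
          ((injOn_uncover_prod_restrict u).mono fun σ hσ => hσ.2 u (Set.mem_insert u U))
    _ = (G.coversContaining U \ G.coversContaining (insert u U)).ncard *
          2 ^ (G.neighborSet u).ncard := by
        rw [Set.ncard_prod, Set.ncard_univ, Nat.card_fun, Nat.card_coe_set_eq,
          Nat.card_eq_fintype_card, Fintype.card_bool]
    _ ≤ _ := Nat.mul_le_mul_left _ (Nat.pow_le_pow_right two_pos hdeg)

lemma ncard_coversContaining_insert_mul_le {U : Set V} {u : V} {d : ℕ} (hu : u ∉ U)
    (hdeg : (G.neighborSet u).ncard ≤ d) :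
    (G.coversContaining (insert u U)).ncard * (2 ^ d + 1) ≤
      (G.coversContaining U).ncard * 2 ^ d := by
  rw [← Set.ncard_sdiff_add_ncard_of_subset (coversContaining_mono (Set.subset_insert u U))]
  have := ncard_coversContaining_insert_le hu hdeg
  nlinarith

lemma ncard_coversContaining_mul_pow_le {U : Set V} {d : ℕ}
    (hdeg : ∀ u ∈ U, (G.neighborSet u).ncard ≤ d) :
    (G.coversContaining U).ncard * (2 ^ d + 1) ^ U.ncard ≤
      (G.coversContaining ∅).ncard * (2 ^ d) ^ U.ncard := by
  induction U, U.toFinite using Set.Finite.induction_on with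
  | empty => simp
  | @insert u W hu _ ih =>
    rw [Set.ncard_insert_of_notMem hu]
    calc (G.coversContaining (insert u W)).ncard * (2 ^ d + 1) ^ (W.ncard + 1)
        = (G.coversContaining (insert u W)).ncard * (2 ^ d + 1) * (2 ^ d + 1) ^ W.ncard := by
          ring
      _ ≤ (G.coversContaining W).ncard * 2 ^ d * (2 ^ d + 1) ^ W.ncard :=
          Nat.mul_le_mul_right _
            (ncard_coversContaining_insert_mul_le hu (hdeg u (Set.mem_insert u W)))
      _ = (G.coversContaining W).ncard * (2 ^ d + 1) ^ W.ncard * 2 ^ d := by ring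
      _ ≤ (G.coversContaining ∅).ncard * (2 ^ d) ^ W.ncard * 2 ^ d :=
          Nat.mul_le_mul_right _ (ih fun v hv => hdeg v (Set.mem_insert_of_mem u hv))
      _ = (G.coversContaining ∅).ncard * (2 ^ d) ^ (W.ncard + 1) := by ring

end SimpleGraph

theorem two_rpow_div_mul_pow_le {q : ℝ} (hq : 0 ≤ q) (n : ℕ) :
    (2 : ℝ) ^ (n / (q + 1)) * q ^ n ≤ (q + 1) ^ n := by
  have hq1 : 0 < q + 1 := by linarith
  have hp : 1 / (q + 1) ≤ 1 := (div_le_one hq1).2 (by linarith)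
  have hbase : (2 : ℝ) ^ (1 / (q + 1)) * q ≤ q + 1 := by
    have bernoulli : (2 : ℝ) ^ (1 / (q + 1)) ≤ 1 + 1 / (q + 1) := by
      simpa [one_add_one_eq_two] using
        rpow_one_add_le_one_add_mul_self (s := 1) (by norm_num) (by positivity) hp
    calc (2 : ℝ) ^ (1 / (q + 1)) * q ≤ (1 + 1 / (q + 1)) * q := by gcongr
      _ = q + q / (q + 1) := by ring
      _ ≤ q + 1 := by gcongr; exact (div_le_one hq1).2 (by linarith)
  calc (2 : ℝ) ^ (n / (q + 1)) * q ^ n = ((2 : ℝ) ^ (1 / (q + 1)) * q) ^ n := by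
        rw [mul_pow, ← Real.rpow_natCast (2 ^ _), ← Real.rpow_mul zero_le_two,
          one_div_mul_eq_div]
    _ ≤ (q + 1) ^ n := pow_le_pow_left₀ (by positivity) hbase n

/-- Theorem `manyvars1`: for each degree bound `d` there is a constant `b_d > 1` such
that for every finite graph `G` of max degree at most `d` and every `U ⊆ V(G)`, the
number of satisfying assignments of `φ(G)` (vertex covers) setting all of `U` to true
is at most `|φ(G)| / 2^{|U|/b_d}`. -/
theorem stmt15 (d : ℕ) :
    ∃ b : ℝ, 1 < b ∧
      ∀ (V : Type) (_ : Fintype V) (G : SimpleGraph V),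
        (∀ v : V, (G.neighborSet v).ncard ≤ d) →
        ∀ U : Set V,
          (Set.ncard {σ : V → Bool |
              (∀ a b : V, G.Adj a b → (σ a = true ∨ σ b = true)) ∧
              ∀ u ∈ U, σ u = true} : ℝ) ≤
            (Set.ncard {σ : V → Bool |
                ∀ a b : V, G.Adj a b → (σ a = true ∨ σ b = true)} : ℝ) /
              (2 : ℝ) ^ ((U.ncard : ℝ) / b) := by
  refine ⟨2 ^ d + 1, lt_add_of_pos_left 1 (by positivity), fun V _ G hdeg U => ?_⟩
  have hall : {σ : V → Bool | ∀ a b : V, G.Adj a b → (σ a = true ∨ σ b = true)} =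
      G.coversContaining ∅ := by
    ext; simp [SimpleGraph.coversContaining, SimpleGraph.IsCoverAssignment]
  change ((G.coversContaining U).ncard : ℝ) ≤ _
  rw [hall, le_div_iff₀ (by positivity)]
  have hcount : ((G.coversContaining U).ncard : ℝ) * (2 ^ d + 1) ^ U.ncard ≤
      (G.coversContaining ∅).ncard * (2 ^ d) ^ U.ncard := by
    exact_mod_cast SimpleGraph.ncard_coversContaining_mul_pow_le fun u _ => hdeg u
  have hexp := two_rpow_div_mul_pow_le (q := (2 : ℝ) ^ d) (by positivity) U.ncard
  refine le_of_mul_le_mul_right ?_ (by positivity : (0 : ℝ) < (2 ^ d) ^ U.ncard)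
  calc ((G.coversContaining U).ncard : ℝ) * 2 ^ ((U.ncard : ℝ) / (2 ^ d + 1)) *
        (2 ^ d) ^ U.ncard ≤ (G.coversContaining U).ncard * (2 ^ d + 1) ^ U.ncard := by
        rw [mul_assoc]; gcongr
    _ ≤ _ := hcount
end

section
/- Let T be a tree, H a graph, and T(H) the graph formed by taking a disjoint copy H^v of H for each vertex v of T and adding edges between u^i and v^i for every edge {u,v} of T and every vertex i of H. If H is a path on k/2 vertices (k even), then the treewidth of T(H) is at most k. -/
/-!
A tree has treewidth one: root it and take the bags `{v, parent v}`. In general, if the bags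
`B i` form a tree decomposition of `G`, then the bags `B i × V(H)` form one of `G □ H`, since
a vertex `(v, a)` lies in exactly the bags of `v`. For `T □ P_m` this gives bags of size `2m`.
-/

/-- `G` has a tree decomposition of width at most `k`: a tree `T` on an index type `ι`
with bags `B i ⊆ V(G)` of size at most `k+1` covering all vertices and edges, such
that for every vertex the set of bags containing it induces a connected subtree. -/
def HasTreeDecompWidth {V : Type*} (G : SimpleGraph V) (k : ℕ) : Prop :=
  ∃ (ι : Type) (T : SimpleGraph ι) (B : ι → Set V),
    T.Connected ∧ T.IsAcyclic ∧
    (∀ v : V, ∃ i, v ∈ B i) ∧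
    (∀ a b : V, G.Adj a b → ∃ i, a ∈ B i ∧ b ∈ B i) ∧
    (∀ v : V, (T.induce {i | v ∈ B i}).Connected) ∧
    (∀ i, (B i).ncard ≤ k + 1)

namespace SimpleGraph

lemma IsTree.exists_parent {V : Type*} {G : SimpleGraph V} (hG : G.IsTree) :
    ∃ p : V → V, (∀ v, p v = v ∨ G.Adj v (p v)) ∧ ∀ a b, G.Adj a b → p a = b ∨ p b = a := by
  classical
  obtain ⟨r⟩ := hG.connected.nonempty
  choose f hf hf_unique using (hG.existsUnique_path · r)
  have f_cons {a b} (h : G.Adj a b) (ha : a ∉ (f b).support) : f a = .cons h (f b) :=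
    (hf_unique a _ ((hf b).cons ha)).symm
  have f_dropUntil {a b} (ha : a ∈ (f b).support) : f a = (f b).dropUntil a ha :=
    (hf_unique a _ ((hf b).dropUntil ha)).symm
  refine ⟨fun v => (f v).snd, fun v => ?_, fun a b h => ?_⟩
  · by_cases hv : (f v).Nil
    · have hlen : (f v).length ≤ 1 := by simp [Walk.length_eq_zero_iff.mpr hv]
      exact Or.inl (((f v).getVert_of_length_le hlen).trans hv.eq.symm)
    · exact Or.inr (Walk.adj_snd hv)
  by_cases ha : a ∈ (f b).support
  · by_cases hb : b ∈ (f a).support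
    · -- each of `f a`, `f b` would be a proper suffix of the other
      have hab := Walk.length_dropUntil_lt_length ha h.ne
      have hba := Walk.length_dropUntil_lt_length hb h.ne'
      rw [← f_dropUntil] at hab hba
      omega
    · simp [f_cons h.symm hb]
  · simp [f_cons h ha]

lemma IsTree.hasTreeDecompWidth_one {V : Type} {G : SimpleGraph V} (hG : G.IsTree) :
    HasTreeDecompWidth G 1 := by
  obtain ⟨p, hp, hp_edge⟩ := hG.exists_parent
  refine ⟨V, G, fun v => {v, p v}, hG.connected, hG.isAcyclic, fun v => ⟨v, by simp⟩,
    fun a b h => ?_, fun v => ?_, fun v => ?_⟩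
  · rcases hp_edge a b h with rfl | rfl
    · exact ⟨a, by simp⟩
    · exact ⟨b, by simp⟩
  · -- the bags containing `v` are those of `v` and of its children, which form a star
    have hv : v ∈ ({v, p v} : Set V) := by simp
    have to_center (x : V) (hx : v ∈ ({x, p x} : Set V)) :
        (G.induce {i | v ∈ ({i, p i} : Set V)}).Reachable ⟨x, hx⟩ ⟨v, hv⟩ := by
      obtain rfl | hxv := eq_or_ne x v
      · rfl
      obtain hpx | hpx := hp x
      · simp [hpx, hxv.symm] at hx
      · obtain rfl : p x = v := by simpa [hxv.symm, eq_comm] using hx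
        exact Adj.reachable (by simpa using hpx)
    rw [connected_iff]
    exact ⟨fun x y => (to_center x x.2).trans (to_center y y.2).symm, ⟨⟨v, hv⟩⟩⟩
  · exact (Set.ncard_insert_le _ _).trans (by simp)

end SimpleGraph

theorem HasTreeDecompWidth.boxProd {V W : Type*} {G : SimpleGraph V} {k l : ℕ}
    (hG : HasTreeDecompWidth G k) (H : SimpleGraph W) (hl : (k + 1) * Nat.card W ≤ l + 1) :
    HasTreeDecompWidth (G □ H) l := by
  obtain ⟨ι, T, B, hT, hT', hcover, hedge, hconn, hcard⟩ := hG
  refine ⟨ι, T, fun i => B i ×ˢ Set.univ, hT, hT', fun x => ?_, fun x y h => ?_, fun x => ?_,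
    fun i => ?_⟩
  · simpa using hcover x.1
  · rcases SimpleGraph.boxProd_adj.mp h with ⟨h, -⟩ | ⟨-, h⟩
    · simpa using hedge _ _ h
    · simpa [← h] using hcover x.1
  · have hbags : {i | x ∈ B i ×ˢ (Set.univ : Set W)} = {i | x.1 ∈ B i} := by ext; simp
    exact hbags ▸ hconn x.1
  · rw [Set.ncard_prod, Set.ncard_univ]
    exact (Nat.mul_le_mul_right _ (hcard i)).trans hl

theorem stmt17_general {β : Type} (T : SimpleGraph β) (hT : T.IsTree)
    (m k : ℕ) (hk : k = 2 * m) :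
    HasTreeDecompWidth (T.boxProd (SimpleGraph.pathGraph m)) k :=
  hT.hasTreeDecompWidth_one.boxProd _ (by simp [hk])

/-- If `T` is a tree and `H` is a path on `k/2` vertices (`k` even), then
`T(H) = T □ H` has treewidth at most `k`. -/
theorem stmt17 {β : Type} [Fintype β] (T : SimpleGraph β) (hT : T.IsTree)
    (m k : ℕ) (hk : k = 2 * m) :
    HasTreeDecompWidth (T.boxProd (SimpleGraph.pathGraph m)) k :=
  stmt17_general T hT m k hk
end
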